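/- For n ≥ 2, (n+1) T_n^{(r,k)}(x|λ) + n(r - 1/2 - x) T_{n-1}^{(r,k)}(x|λ) + Σ_{l=0}^{n-2} C(n,l) B_{n-l} T_l^{(r,k)}(x|λ) = -(rλn/(1-λ)) T_{n-1}^{(r+1,k)}(x|λ) + Σ_{l=0}^{n} C(n,l) B_{n-l} T_l^{(r,k-1)}(x|λ). -/

import Mathlib

open PowerSeries Finset

/-- e^{xt} as a formal power series. -/
noncomputable def expX (x : ℂ) : PowerSeries ℂ := rescale x (exp ℂ)

/-- 1 - e^{-t} as a formal power series. -/
noncomputable def oneSubExpNeg : PowerSeries ℂ := 1 - rescale (-1) (exp ℂ)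

/-- Li_k(1-e^{-t}) = Σ_{m≥1} (1-e^{-t})^m / m^k as a formal power series. -/
noncomputable def polyLogC (k : ℤ) : PowerSeries ℂ :=
  mk fun n => ∑ m ∈ Finset.Icc 1 n, (coeff n (oneSubExpNeg ^ m)) * ((m : ℂ) ^ k)⁻¹

/-- integer power of a power series (inverse via `PowerSeries.inv`). -/
noncomputable def zpowS (f : PowerSeries ℂ) (r : ℤ) : PowerSeries ℂ :=
  f ^ r.toNat * (f⁻¹) ^ (-r).toNat

/-- (1-λ)/(e^t-λ). -/
noncomputable def feBase (l : ℂ) : PowerSeries ℂ :=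
  C (1 - l) * (exp ℂ - C l)⁻¹

/-- exponential generating function Σ f(n) t^n/n!. -/
noncomputable def GF (f : ℕ → ℂ) : PowerSeries ℂ := mk fun n => f n / n.factorial

/-- Stirling numbers of the second kind: (e^t-1)^m = m! Σ_l S2(l,m) t^l/l!. -/
noncomputable def S2 (n m : ℕ) : ℂ :=
  (n.factorial : ℂ) / (m.factorial : ℂ) * coeff n ((exp ℂ - 1) ^ m)

/-! Write `F = ∑ T_n t^n/n!`, so that `(1 - e^{-t}) F = f^r Li_k(1 - e^{-t}) e^{xt}` with
`f = (1-λ)/(e^t-λ)`. The three factors on the right satisfy first-order equations: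
`f' = -f - λ/(1-λ) f²`, `(1 - e^{-t}) (Li_k(1 - e^{-t}))' = e^{-t} Li_{k-1}(1 - e^{-t})` (from
`X Li_k' = Li_{k-1}` and the chain rule) and `(e^{xt})' = x e^{xt}`. Differentiating the defining
identity therefore gives a linear differential equation linking `F` to the generating functions
of `T^{(r+1,k)}` and `T^{(r,k-1)}`. Multiplied by `e^t · t/(e^t-1)`, every coefficient becomes a
shift or a Bernoulli convolution, and comparing coefficients of `t^n/n!` gives the identity. -/

theorem coeff_X_mul_derivative {R : Type*} [CommSemiring R] (f : R⟦X⟧) (n : ℕ) :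
    coeff n (X * d⁄dX R f) = n * coeff n f := by
  cases n with
  | zero => simp
  | succ n => rw [coeff_succ_X_mul, coeff_derivative, mul_comm]; push_cast; rfl

theorem derivative_rescale {R : Type*} [CommSemiring R] (a : R) (f : R⟦X⟧) :
    d⁄dX R (rescale a f) = C a * rescale a (d⁄dX R f) := by
  ext n
  simp only [coeff_derivative, coeff_rescale, coeff_C_mul]
  ring

theorem derivative_expX (x : ℂ) : d⁄dX ℂ (expX x) = C x * expX x := by
  rw [expX, derivative_rescale, derivative_exp]

theorem derivative_oneSubExpNeg : d⁄dX ℂ oneSubExpNeg = rescale (-1) (exp ℂ) := by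
  simp [oneSubExpNeg, derivative_rescale, derivative_exp]

theorem constantCoeff_oneSubExpNeg : constantCoeff oneSubExpNeg = 0 := by
  rw [oneSubExpNeg, map_sub, map_one, ← coeff_zero_eq_constantCoeff_apply, coeff_rescale]
  simp

theorem oneSubExpNeg_ne_zero : oneSubExpNeg ≠ 0 := by
  intro h
  simpa [oneSubExpNeg, coeff_rescale] using congrArg (coeff 1) h

theorem hasSubst_oneSubExpNeg : HasSubst oneSubExpNeg :=
  HasSubst.of_constantCoeff_zero' constantCoeff_oneSubExpNeg

theorem coeff_oneSubExpNeg_pow_of_lt {n m : ℕ} (h : n < m) : coeff n (oneSubExpNeg ^ m) = 0 :=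
  coeff_of_lt_order _ <|
    (le_order_pow_of_constantCoeff_eq_zero m constantCoeff_oneSubExpNeg).trans_lt' (mod_cast h)

/-- `Li_k(X) = ∑_{m ≥ 1} X^m / m^k`; the constant term is set to `0` by hand since
`(0 : ℂ) ^ (0 : ℤ) = 1`. -/
noncomputable def polylog (k : ℤ) : ℂ⟦X⟧ :=
  mk fun m => if m = 0 then 0 else ((m : ℂ) ^ k)⁻¹

theorem X_mul_derivative_polylog (k : ℤ) : X * d⁄dX ℂ (polylog k) = polylog (k - 1) := by
  ext n
  rw [coeff_X_mul_derivative, polylog, polylog, coeff_mk, coeff_mk]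
  split_ifs with hn
  · simp
  · have : (n : ℂ) ≠ 0 := Nat.cast_ne_zero.mpr hn
    rw [zpow_sub_one₀ this, mul_inv, inv_inv, mul_comm]

theorem polyLogC_eq_subst (k : ℤ) : polyLogC k = (polylog k).subst oneSubExpNeg := by
  ext n
  rw [coeff_subst' hasSubst_oneSubExpNeg, polyLogC, coeff_mk,
    finsum_eq_sum_of_support_subset (s := Icc 1 n)]
  · refine sum_congr rfl fun m hm => ?_
    rw [polylog, coeff_mk, if_neg (by simp at hm; omega), smul_eq_mul, mul_comm]
  · intro m hm
    simp only [Function.mem_support, ne_eq, smul_eq_mul, mul_eq_zero, not_or] at hm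
    obtain ⟨hm0, hmn⟩ := hm
    have : m ≠ 0 := fun h => hm0 (by simp [polylog, h])
    have : m ≤ n := not_lt.mp (mt coeff_oneSubExpNeg_pow_of_lt hmn)
    simp only [coe_Icc, Set.mem_Icc]
    omega

theorem oneSubExpNeg_mul_derivative_polyLogC (k : ℤ) :
    oneSubExpNeg * d⁄dX ℂ (polyLogC k) = rescale (-1) (exp ℂ) * polyLogC (k - 1) := by
  rw [polyLogC_eq_subst, polyLogC_eq_subst, derivative_subst hasSubst_oneSubExpNeg,
    derivative_oneSubExpNeg, ← X_mul_derivative_polylog, subst_mul hasSubst_oneSubExpNeg,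
    subst_X hasSubst_oneSubExpNeg]
  ring

section zpowS

variable {f : ℂ⟦X⟧} (hf : constantCoeff f ≠ 0)
include hf

theorem zpowS_add_one (r : ℤ) : zpowS f (r + 1) = f * zpowS f r := by
  have hinv : f * f⁻¹ = 1 := PowerSeries.mul_inv_cancel f hf
  unfold zpowS
  rcases le_or_gt 0 r with h | h
  · rw [show (r + 1).toNat = r.toNat + 1 by omega, show (-(r + 1)).toNat = 0 by omega,
      show (-r).toNat = 0 by omega]
    ring
  · rw [show (r + 1).toNat = 0 by omega, show r.toNat = 0 by omega,
      show (-r).toNat = (-(r + 1)).toNat + 1 by omega]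
    linear_combination -f⁻¹ ^ (-(r + 1)).toNat * hinv

theorem mul_derivative_zpowS (r : ℤ) :
    f * d⁄dX ℂ (zpowS f r) = C (r : ℂ) * d⁄dX ℂ f * zpowS f r := by
  have hf0 : f ≠ 0 := fun h => hf (by simp [h])
  induction r using Int.induction_on with
  | zero => simp [zpowS]
  | succ r ih =>
    rw [zpowS_add_one hf, Derivation.leibniz, smul_eq_mul, smul_eq_mul]
    push_cast
    rw [map_add, map_one]
    linear_combination f * ih
  | pred r ih =>
    rw [← sub_add_cancel (-(r : ℤ)) 1, zpowS_add_one hf, Derivation.leibniz, smul_eq_mul,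
      smul_eq_mul] at ih
    refine mul_left_cancel₀ hf0 ?_
    push_cast at ih ⊢
    rw [sub_add_cancel] at ih
    rw [map_sub, map_one]
    linear_combination ih

end zpowS

section feBase

variable {l : ℂ} (hl : l ≠ 1)
include hl

theorem constantCoeff_feBase : constantCoeff (feBase l) = 1 := by
  have : (1 : ℂ) - l ≠ 0 := sub_ne_zero.mpr hl.symm
  simp [feBase, this]

theorem derivative_feBase :
    d⁄dX ℂ (feBase l) = -feBase l - C (l / (1 - l)) * feBase l ^ 2 := by
  have h1l : (1 : ℂ) - l ≠ 0 := sub_ne_zero.mpr hl.symm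
  have hinv : (exp ℂ - C l) * (exp ℂ - C l)⁻¹ = 1 :=
    PowerSeries.mul_inv_cancel _ (by simpa using h1l)
  have hC : C (l / (1 - l)) * C (1 - l) = C l := by rw [← map_mul, div_mul_cancel₀ _ h1l]
  rw [feBase, Derivation.leibniz, derivative_inv', derivative_C, map_sub (d⁄dX ℂ),
    derivative_exp, derivative_C]
  simp only [smul_eq_mul, sub_zero, mul_zero, add_zero]
  linear_combination (-C (1 - l) * (exp ℂ - C l)⁻¹) * hinv
    + (C (1 - l) * (exp ℂ - C l)⁻¹ ^ 2) * hC

theorem derivative_zpowS_feBase (r : ℤ) :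
    d⁄dX ℂ (zpowS (feBase l) r) = -C (r : ℂ) * zpowS (feBase l) r
      - C (r * l / (1 - l)) * feBase l * zpowS (feBase l) r := by
  have hf : constantCoeff (feBase l) ≠ 0 := by simp [constantCoeff_feBase hl]
  have hf0 : feBase l ≠ 0 := fun h => hf (by simp [h])
  have h := mul_derivative_zpowS hf r
  rw [derivative_feBase hl] at h
  refine mul_left_cancel₀ hf0 ?_
  rw [mul_div_assoc, map_mul]
  linear_combination h

end feBase

section ode

variable {lam : ℂ} (hlam : lam ≠ 1) {r k : ℤ} {x : ℂ} {F F' F'' : ℂ⟦X⟧}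
  (hF : oneSubExpNeg * F = zpowS (feBase lam) r * polyLogC k * expX x)
  (hF' : oneSubExpNeg * F' = zpowS (feBase lam) (r + 1) * polyLogC k * expX x)
  (hF'' : oneSubExpNeg * F'' = zpowS (feBase lam) r * polyLogC (k - 1) * expX x)
include hlam hF hF' hF''

theorem ode_expNeg :
    rescale (-1) (exp ℂ) * F + oneSubExpNeg * d⁄dX ℂ F
      = (C x - C (r : ℂ)) * oneSubExpNeg * F - C (r * lam / (1 - lam)) * oneSubExpNeg * F'
        + rescale (-1) (exp ℂ) * F'' := by
  have hDF := congrArg (d⁄dX ℂ) hF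
  simp only [Derivation.leibniz, smul_eq_mul, derivative_oneSubExpNeg, derivative_expX] at hDF
  set M := rescale (-1) (exp ℂ)
  set g := oneSubExpNeg
  set Φ := zpowS (feBase lam) r
  have hg0 : g ≠ 0 := oneSubExpNeg_ne_zero
  have hΦ := derivative_zpowS_feBase hlam r
  have hL := oneSubExpNeg_mul_derivative_polyLogC k
  rw [zpowS_add_one (by simp [constantCoeff_feBase hlam])] at hF'
  refine mul_left_cancel₀ hg0 ?_
  linear_combination g * hDF + g * polyLogC k * expX x * hΦ + Φ * expX x * hL
    + (C (r : ℂ) * g - C x * g) * hF + C (r * lam / (1 - lam)) * g * hF' - M * hF''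

theorem ode_bernoulli :
    X * d⁄dX ℂ F + C ((r : ℂ) - x) * (X * F) + bernoulliPowerSeries ℂ * F
      = -C (r * lam / (1 - lam)) * (X * F') + bernoulliPowerSeries ℂ * F'' := by
  have h := ode_expNeg hlam hF hF' hF''
  have hEM : exp ℂ * rescale (-1) (exp ℂ) = 1 := exp_mul_exp_neg_eq_one
  have hB := bernoulliPowerSeries_mul_exp_sub_one ℂ
  rw [oneSubExpNeg] at h
  rw [map_sub]
  linear_combination bernoulliPowerSeries ℂ * exp ℂ * h
    - (d⁄dX ℂ F - (C x - C (r : ℂ)) * F + C (r * lam / (1 - lam)) * F') * hB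
    + bernoulliPowerSeries ℂ * (d⁄dX ℂ F + (C (r : ℂ) - C x - 1) * F
      + C (r * lam / (1 - lam)) * F' + F'') * hEM

end ode

section GF

open Nat

theorem coeff_GF (f : ℕ → ℂ) (n : ℕ) : coeff n (GF f) = f n / n ! := coeff_mk _ _

theorem factorial_mul_coeff_GF (f : ℕ → ℂ) (n : ℕ) : (n ! : ℂ) * coeff n (GF f) = f n := by
  rw [coeff_GF, mul_div_cancel₀ _ (mod_cast n.factorial_ne_zero)]

theorem X_mul_GF (f : ℕ → ℂ) : X * GF f = GF fun n => n * f (n - 1) := by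
  ext n
  cases n with
  | zero => simp [GF]
  | succ n =>
    rw [coeff_succ_X_mul, coeff_GF, coeff_GF, factorial_succ, Nat.add_sub_cancel, Nat.cast_mul,
      mul_div_mul_left _ _ (Nat.cast_ne_zero.mpr n.succ_ne_zero)]

theorem X_mul_derivative_GF (f : ℕ → ℂ) : X * d⁄dX ℂ (GF f) = GF fun n => n * f n := by
  ext n
  rw [coeff_X_mul_derivative, coeff_GF, coeff_GF, mul_div_assoc]

theorem C_mul_GF (a : ℂ) (f : ℕ → ℂ) : C a * GF f = GF fun n => a * f n := by
  ext n
  rw [coeff_C_mul, coeff_GF, coeff_GF, mul_div_assoc]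

theorem bernoulliPowerSeries_mul_GF (f : ℕ → ℂ) :
    bernoulliPowerSeries ℂ * GF f
      = GF fun n => ∑ l ∈ range (n + 1), (n.choose l : ℂ) * (bernoulli (n - l) : ℂ) * f l := by
  ext n
  rw [coeff_mul, ← Nat.sum_antidiagonal_swap, Nat.sum_antidiagonal_eq_sum_range_succ_mk,
    coeff_GF, sum_div]
  refine sum_congr rfl fun l hl => ?_
  have hl : l ≤ n := Nat.lt_succ_iff.mp (mem_range.mp hl)
  rw [Prod.swap_prod_mk, coeff_GF, bernoulliPowerSeries, coeff_mk, eq_ratCast,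
    Nat.cast_choose ℂ hl]
  push_cast
  field_simp
  rw [mul_div_mul_right _ _ (mod_cast n.factorial_ne_zero)]

end GF

theorem sum_range_choose_mul_bernoulli (f : ℕ → ℂ) (m : ℕ) :
    ∑ l ∈ range (m + 3), ((m + 2).choose l : ℂ) * (bernoulli (m + 2 - l) : ℂ) * f l
      = ∑ l ∈ range (m + 1), ((m + 2).choose l : ℂ) * (bernoulli (m + 2 - l) : ℂ) * f l
        - (m + 2) / 2 * f (m + 1) + f (m + 2) := by
  rw [sum_range_succ, sum_range_succ, Nat.choose_self, Nat.choose_succ_self_right, Nat.sub_self,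
    show m + 2 - (m + 1) = 1 by omega, bernoulli_zero, bernoulli_one]
  push_cast
  ring

theorem stmt7 (lam : ℂ) (hlam : lam ≠ 1) (r k : ℤ) (T T' T'' : ℕ → ℂ → ℂ)
    (hT : ∀ x : ℂ, oneSubExpNeg * GF (fun n => T n x)
        = zpowS (feBase lam) (r) * polyLogC (k) * expX x)
    (hT' : ∀ x : ℂ, oneSubExpNeg * GF (fun n => T' n x)
        = zpowS (feBase lam) (r + 1) * polyLogC (k) * expX x)
    (hT'' : ∀ x : ℂ, oneSubExpNeg * GF (fun n => T'' n x)
        = zpowS (feBase lam) (r) * polyLogC (k - 1) * expX x) :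
    ∀ (n : ℕ), 2 ≤ n → ∀ (x : ℂ),
      ((n : ℂ) + 1) * T n x + (n : ℂ) * ((r : ℂ) - 1 / 2 - x) * T (n - 1) x +
        ∑ l ∈ range (n - 1), (n.choose l : ℂ) * ((bernoulli (n - l) : ℚ) : ℂ) * T l x
      = -((r : ℂ) * lam * (n : ℂ) / (1 - lam)) * T' (n - 1) x +
        ∑ l ∈ range (n + 1), (n.choose l : ℂ) * ((bernoulli (n - l) : ℚ) : ℂ) * T'' l x := by
  intro n hn x
  obtain ⟨m, rfl⟩ : ∃ m, n = m + 2 := ⟨n - 2, by omega⟩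
  have h := congrArg (fun φ => ((m + 2).factorial : ℂ) * coeff (m + 2) φ)
    (ode_bernoulli hlam (hT x) (hT' x) (hT'' x))
  simp only [X_mul_derivative_GF, X_mul_GF, C_mul_GF, bernoulliPowerSeries_mul_GF, neg_mul,
    map_add, map_neg, mul_add, mul_neg, factorial_mul_coeff_GF, sum_range_choose_mul_bernoulli,
    show m + 2 - 1 = m + 1 by omega] at h ⊢
  push_cast at h ⊢
  linear_combination h
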